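/- arXiv:1806.05464 — 2 statements merged into one kernel-verified Lean document; each statement's English description precedes it below -/
import Mathlib

section
/- Let γ̄ be a class K∞ function such that lim_{s→0⁺} γ̄(s)/s exists and equals C with 0 < C < ∞. Let t_k ∈ ℝ and let r : [t_k,∞) → ℝᵐ be continuous with r(t_k) = 0. Then the next triggering time t_{k+1} := inf{ t > t_k : (t − t_k)·γ̄(‖r_[t_k,t]‖) = ‖r_[t_k,t]‖ and ‖r_[t_k,t]‖ ≠ 0 } (with inf ∅ = +∞) satisfies t_{k+1} > t_k. -/
open Filter Set

/-- A function is of class K∞. -/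
def IsClassKInf (γ : ℝ → ℝ) : Prop :=
  ContinuousOn γ (Set.Ici 0) ∧ StrictMonoOn γ (Set.Ici 0) ∧ γ 0 = 0 ∧
    Filter.Tendsto γ Filter.atTop Filter.atTop

/-- A function is of class KL. -/
def IsClassKL (β : ℝ → ℝ → ℝ) : Prop :=
  (∀ t, 0 ≤ t → ContinuousOn (fun s => β s t) (Set.Ici 0) ∧
      StrictMonoOn (fun s => β s t) (Set.Ici 0) ∧ β 0 t = 0) ∧
  (∀ s, 0 ≤ s → AntitoneOn (fun t => β s t) (Set.Ici 0) ∧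
      Filter.Tendsto (fun t => β s t) Filter.atTop (nhds 0))

/-- `‖v_[a,b]‖ = sup_{a ≤ τ ≤ b} ‖v τ‖`. -/
noncomputable def supNorm {E : Type*} [NormedAddCommGroup E] (v : ℝ → E) (a b : ℝ) : ℝ :=
  sSup ((fun τ => ‖v τ‖) '' Set.Icc a b)

/-- The next triggering time (in `EReal`, so that `sInf ∅ = ⊤`). -/
noncomputable def triggerTime {E : Type*} [NormedAddCommGroup E]
    (γb : ℝ → ℝ) (r : ℝ → E) (tk : ℝ) : EReal :=
  sInf (((↑) : ℝ → EReal) ''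
    {t : ℝ | tk < t ∧ (t - tk) * γb (supNorm r tk t) = supNorm r tk t ∧ supNorm r tk t ≠ 0})

/-! Near `0` the limit gives `γb s < (C + 1) s` for `s > 0`, and continuity with `r tk = 0`
makes `S t = ‖r_[tk,t]‖` tend to `0` as `t → tk⁺`. So once also `(t - tk)(C + 1) < 1`, a
nonzero `S t` would satisfy `S t = (t - tk) γb (S t) < S t`; no trigger time lies in some
interval `(tk, tk + ε)`. -/

open Topology

section supNorm

variable {E : Type*} [NormedAddCommGroup E]

theorem supNorm_nonneg (v : ℝ → E) (a b : ℝ) : 0 ≤ supNorm v a b :=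
  Real.sSup_nonneg (by rintro _ ⟨τ, -, rfl⟩; exact norm_nonneg _)

theorem supNorm_le {v : ℝ → E} {a b M : ℝ} (hv : ∀ τ ∈ Icc a b, ‖v τ‖ ≤ M) (hM : 0 ≤ M) :
    supNorm v a b ≤ M :=
  Real.sSup_le (by rintro _ ⟨τ, hτ, rfl⟩; exact hv τ hτ) hM

theorem tendsto_supNorm_nhdsGE_zero {v : ℝ → E} {a : ℝ} (hv : ContinuousWithinAt v (Ici a) a)
    (ha : v a = 0) : Tendsto (supNorm v a) (𝓝[≥] a) (𝓝 0) := by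
  rw [Metric.tendsto_nhds]
  intro ε hε
  have hsmall : ∀ᶠ τ in 𝓝[≥] a, ‖v τ‖ < ε / 2 := by
    have hnorm := hv.norm
    rw [ContinuousWithinAt, ha, norm_zero] at hnorm
    exact hnorm.eventually_lt_const (half_pos hε)
  obtain ⟨u, hau, hu⟩ := mem_nhdsGE_iff_exists_Ico_subset.1 hsmall
  filter_upwards [Ico_mem_nhdsGE hau] with t ht
  have hle : supNorm v a t ≤ ε / 2 :=
    supNorm_le (fun τ hτ => (hu ⟨hτ.1, hτ.2.trans_lt ht.2⟩).le) (half_pos hε).le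
  rw [Real.dist_eq, sub_zero, abs_of_nonneg (supNorm_nonneg v a t)]
  linarith

end supNorm

theorem eventually_sub_mul_ne_self {γ S : ℝ → ℝ} {C a : ℝ}
    (hγ : Tendsto (fun s => γ s / s) (𝓝[>] 0) (𝓝 C))
    (hS : Tendsto S (𝓝[>] a) (𝓝 0)) (hS_nonneg : ∀ t, 0 ≤ S t) :
    ∀ᶠ t in 𝓝[>] a, S t ≠ 0 → (t - a) * γ (S t) ≠ S t := by
  have hγ_lt : ∀ᶠ s in 𝓝 0, s ∈ Ioi 0 → γ s < (C + 1) * s := by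
    rw [← eventually_nhdsWithin_iff]
    filter_upwards [hγ.eventually_lt_const (lt_add_one C), self_mem_nhdsWithin]
      with s hs (hs_pos : 0 < s)
    rwa [div_lt_iff₀ hs_pos] at hs
  have hsmall : ∀ᶠ t in 𝓝[>] a, (t - a) * (C + 1) < 1 := by
    have hcont : Tendsto (fun t => (t - a) * (C + 1)) (𝓝 a) (𝓝 0) :=
      ((continuous_sub_right a).mul continuous_const).tendsto' a 0 (by simp)
    exact (hcont.eventually_lt_const one_pos).filter_mono nhdsWithin_le_nhds
  filter_upwards [hS.eventually hγ_lt, hsmall, self_mem_nhdsWithin]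
    with t hγt hsmallt (hat : a < t) hne heq
  have hpos : 0 < S t := (hS_nonneg t).lt_of_ne' hne
  have hlt : S t < S t := calc
    S t = (t - a) * γ (S t) := heq.symm
    _ < (t - a) * ((C + 1) * S t) := mul_lt_mul_of_pos_left (hγt hpos) (sub_pos.2 hat)
    _ = (t - a) * (C + 1) * S t := by ring
    _ < 1 * S t := mul_lt_mul_of_pos_right hsmallt hpos
    _ = S t := one_mul _
  exact hlt.false

theorem coe_lt_sInf_image_of_eventually_notMem {T : Set ℝ} {a : ℝ} (hT : T ⊆ Ioi a)
    (h : ∀ᶠ t in 𝓝[>] a, t ∉ T) : (a : EReal) < sInf (((↑) : ℝ → EReal) '' T) := by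
  obtain ⟨u, hau, hu⟩ := mem_nhdsGT_iff_exists_Ioo_subset.1 h
  refine (EReal.coe_lt_coe_iff.2 hau).trans_le (le_sInf ?_)
  rintro _ ⟨t, ht, rfl⟩
  exact EReal.coe_le_coe_iff.2 (not_lt.1 fun htu => hu ⟨hT ht, htu⟩ ht)

theorem trigger_time_positive_general {m : ℕ} (γb : ℝ → ℝ)
    (C : ℝ)
    (hlim : Filter.Tendsto (fun s => γb s / s) (nhdsWithin 0 (Set.Ioi 0)) (nhds C))
    (tk : ℝ) (r : ℝ → EuclideanSpace ℝ (Fin m))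
    (hrcont : ContinuousOn r (Set.Ici tk)) (hr0 : r tk = 0) :
    (tk : EReal) < triggerTime γb r tk := by
  have hsup : Tendsto (supNorm r tk) (𝓝[>] tk) (𝓝 0) :=
    (tendsto_supNorm_nhdsGE_zero (hrcont tk self_mem_Ici) hr0).mono_left
      (nhdsWithin_mono _ Ioi_subset_Ici_self)
  refine coe_lt_sInf_image_of_eventually_notMem (fun t ht => ht.1) ?_
  filter_upwards [eventually_sub_mul_ne_self hlim hsup (supNorm_nonneg r tk)]
    with t ht ⟨_, heq, hne⟩
  exact ht hne heq

/-- First step of the proof of Theorem 1: the inter-sampling interval is strictly positive. -/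
theorem trigger_time_positive {m : ℕ} (γb : ℝ → ℝ) (hγb : IsClassKInf γb)
    (C : ℝ) (hC : 0 < C)
    (hlim : Filter.Tendsto (fun s => γb s / s) (nhdsWithin 0 (Set.Ioi 0)) (nhds C))
    (tk : ℝ) (r : ℝ → EuclideanSpace ℝ (Fin m))
    (hrcont : ContinuousOn r (Set.Ici tk)) (hr0 : r tk = 0) :
    (tk : EReal) < triggerTime γb r tk :=
  trigger_time_positive_general γb C hlim tk r hrcont hr0
end

section
/- Let b > 0, c > 0 be constants and let ψ ≥ 0, m ≥ 0, m̃ ≥ 0, ι ≥ 0, Z ≥ 0, X ≥ 0, x̄, v, F be real numbers with |F| ≤ ι·Z + m̃·X + m·|x̄|. Define ϑ := −(2c + b²/4 + m + ψ)·x̄/b. Then x̄·(F + b·ϑ + b·v) ≤ −ψ·x̄² + (ι·Z)²/(4·c) + (m̃·X)²/(4·c) + v². -/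
open Filter Set

/- The controller cancels the `m x̄²` part of the drift, and Young's inequality absorbs each of
the three remaining cross terms `|x̄| ι Z`, `|x̄| m̃ X` and `x̄ b v` into one of the damping terms
`c x̄²`, `c x̄²`, `(b²/4) x̄²`, leaving `-ψ x̄²` and the squared gains. -/

theorem mul_le_mul_sq_add_sq_div {c : ℝ} (hc : 0 < c) (a b : ℝ) :
    a * b ≤ c * a ^ 2 + b ^ 2 / (4 * c) := by
  rw [← sub_nonneg]
  have key : c * a ^ 2 + b ^ 2 / (4 * c) - a * b = (2 * c * a - b) ^ 2 / (4 * c) := by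
    field_simp
    ring
  rw [key]
  positivity

theorem mul_le_abs_mul_add_mul_sq {x F p m : ℝ} (hF : |F| ≤ p + m * |x|) :
    x * F ≤ |x| * p + m * x ^ 2 :=
  calc x * F ≤ |x| * |F| := (le_abs_self _).trans_eq (abs_mul x F)
    _ ≤ |x| * (p + m * |x|) := mul_le_mul_of_nonneg_left hF (abs_nonneg x)
    _ = |x| * p + m * x ^ 2 := by rw [← sq_abs x]; ring

theorem lyapunov_estimate_recursive_step_general (b c ψ m mt ι Z X xb v F : ℝ)
    (hb : 0 < b) (hc : 0 < c)
    (hF : |F| ≤ ι * Z + mt * X + m * |xb|) :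
    xb * (F + b * (-(2 * c + b ^ 2 / 4 + m + ψ) * xb / b) + b * v) ≤
      -ψ * xb ^ 2 + (ι * Z) ^ 2 / (4 * c) + (mt * X) ^ 2 / (4 * c) + v ^ 2 := by
  rw [mul_div_cancel₀ _ hb.ne']
  have drift := mul_le_abs_mul_add_mul_sq (p := ι * Z + mt * X) hF
  have youngZ := mul_le_mul_sq_add_sq_div hc |xb| (ι * Z)
  have youngX := mul_le_mul_sq_add_sq_div hc |xb| (mt * X)
  have youngV := mul_le_mul_sq_add_sq_div one_pos v (b * xb)
  rw [sq_abs] at youngZ youngX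
  linarith

/-- The pointwise Lyapunov derivative estimate in the recursive step (j ≥ 2) of the proof
of Lemma 2 for lower-triangular systems. -/
theorem lyapunov_estimate_recursive_step (b c ψ m mt ι Z X xb v F : ℝ)
    (hb : 0 < b) (hc : 0 < c) (hψ : 0 ≤ ψ) (hm : 0 ≤ m) (hmt : 0 ≤ mt) (hι : 0 ≤ ι)
    (hZ : 0 ≤ Z) (hX : 0 ≤ X)
    (hF : |F| ≤ ι * Z + mt * X + m * |xb|) :
    xb * (F + b * (-(2 * c + b ^ 2 / 4 + m + ψ) * xb / b) + b * v) ≤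
      -ψ * xb ^ 2 + (ι * Z) ^ 2 / (4 * c) + (mt * X) ^ 2 / (4 * c) + v ^ 2 :=
  lyapunov_estimate_recursive_step_general b c ψ m mt ι Z X xb v F hb hc hF
end
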